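/- arXiv:2507.14701 — 3 statements merged into one kernel-verified Lean document; each statement's English description precedes it below -/
import Mathlib

section
/- Let n ≥ 2, let f be a solution of the n×n Pulsar puzzle, and let g be a solution of the (n−1)×(n−1) Pulsar puzzle. Then the uncircled entries of f are determined by g: for all r, c with 2 ≤ r ≤ n and 1 ≤ c ≤ n−1 such that (r,c) ∉ C_n, one has f(r,c) = n − g(c, n−r+1). -/
/-- The circled set `C n` of the `n × n` Pulsar puzzle, as a predicate on cells `(r, c)`
(1-indexed).  `C 1 = {(1,1)}`, and for `n ≥ 2`, a cell `(r,c)` of the grid is circled iff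
`r = 1`, or `r ≥ 2`, `c ≥ 2` and `(n - c + 1, r - 1)` is circled in `C (n-1)`. -/
def Circled : ℕ → ℕ × ℕ → Prop
  | 0, _ => False
  | 1, p => p = (1, 1)
  | (n + 2), (r, c) =>
      1 ≤ r ∧ r ≤ n + 2 ∧ 1 ≤ c ∧ c ≤ n + 2 ∧
        (r = 1 ∨ (2 ≤ r ∧ 2 ≤ c ∧ Circled (n + 1) (n + 2 - c + 1, r - 1)))

/-- `f` is a Latin square of order `n`: on the grid of cells `(r, c)` with `1 ≤ r, c ≤ n`
it takes values in `{1, …, n}`, with distinct values on distinct cells of any one row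
and on distinct cells of any one column. -/
def IsLatinSquare (n : ℕ) (f : ℕ × ℕ → ℕ) : Prop :=
  (∀ r c, 1 ≤ r → r ≤ n → 1 ≤ c → c ≤ n → 1 ≤ f (r, c) ∧ f (r, c) ≤ n) ∧
  (∀ r c₁ c₂, 1 ≤ r → r ≤ n → 1 ≤ c₁ → c₁ ≤ n → 1 ≤ c₂ → c₂ ≤ n → c₁ ≠ c₂ →
    f (r, c₁) ≠ f (r, c₂)) ∧
  (∀ r₁ r₂ c, 1 ≤ r₁ → r₁ ≤ n → 1 ≤ r₂ → r₂ ≤ n → 1 ≤ c → c ≤ n → r₁ ≠ r₂ →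
    f (r₁, c) ≠ f (r₂, c))

/-- `f` is a solution of the `n × n` Pulsar puzzle: a Latin square of order `n` such that
each circled entry equals the number of circled cells carrying that same value. -/
def IsPulsarSolution (n : ℕ) (f : ℕ × ℕ → ℕ) : Prop :=
  IsLatinSquare n f ∧
    ∀ p, Circled n p → f p = Set.ncard {q : ℕ × ℕ | Circled n q ∧ f q = f p}

/-- pair of (row circled-count, column circled-count) functions of `C n`. -/
def RK : ℕ → ((ℕ → ℕ) × (ℕ → ℕ))
  | 0 => (fun _ => 0, fun _ => 0)
  | n + 1 =>
      (fun r => if r = 1 then n + 1 else (RK n).2 (r - 1),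
       fun c => if c = 1 then 1 else 1 + (RK n).1 (n + 2 - c))

def Rf (n : ℕ) : ℕ → ℕ := (RK n).1
def Kf (n : ℕ) : ℕ → ℕ := (RK n).2

lemma Rf_succ (n r : ℕ) : Rf (n+1) r = if r = 1 then n + 1 else Kf n (r-1) := rfl
lemma Kf_succ (n c : ℕ) : Kf (n+1) c = if c = 1 then 1 else 1 + Rf n (n + 2 - c) := rfl

lemma Rf_one (n : ℕ) : Rf (n+1) 1 = n+1 := rfl
lemma Kf_one (n : ℕ) : Kf (n+1) 1 = 1 := rfl

/-- ranges of Rf and Kf -/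
lemma RK_range (n : ℕ) : ∀ x, 1 ≤ x → x ≤ n →
    (1 ≤ Rf n x ∧ Rf n x ≤ n) ∧ (1 ≤ Kf n x ∧ Kf n x ≤ n) := by
  induction n with
  | zero => intro x h1 h2; omega
  | succ n ih =>
    intro x h1 h2
    constructor
    · rw [Rf_succ]
      split
      · omega
      · rename_i hx
        have := ih (x-1) (by omega) (by omega)
        omega
    · rw [Kf_succ]
      split
      · omega
      · rename_i hx
        have := ih (n + 2 - x) (by omega) (by omega)
        omega

lemma Rf_range (n x : ℕ) (h1 : 1 ≤ x) (h2 : x ≤ n) : 1 ≤ Rf n x ∧ Rf n x ≤ n :=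
  (RK_range n x h1 h2).1
lemma Kf_range (n x : ℕ) (h1 : 1 ≤ x) (h2 : x ≤ n) : 1 ≤ Kf n x ∧ Kf n x ≤ n :=
  (RK_range n x h1 h2).2

/-- injectivity -/
lemma RK_inj (n : ℕ) : ∀ x y, 1 ≤ x → x ≤ n → 1 ≤ y → y ≤ n →
    (Rf n x = Rf n y → x = y) ∧ (Kf n x = Kf n y → x = y) := by
  induction n with
  | zero => intro x y h1 h2; omega
  | succ n ih =>
    intro x y hx1 hx2 hy1 hy2
    constructor
    · rw [Rf_succ, Rf_succ]
      split <;> split <;> rename_i h h' <;> intro heq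
      · omega
      · have := (Kf_range n (y-1) (by omega) (by omega)); omega
      · have := (Kf_range n (x-1) (by omega) (by omega)); omega
      · have := (ih (x-1) (y-1) (by omega) (by omega) (by omega) (by omega)).2 heq
        omega
    · rw [Kf_succ, Kf_succ]
      split <;> split <;> rename_i h h' <;> intro heq
      · omega
      · have := (Rf_range n (n+2-y) (by omega) (by omega)); omega
      · have := (Rf_range n (n+2-x) (by omega) (by omega)); omega
      · have := (ih (n+2-x) (n+2-y) (by omega) (by omega) (by omega) (by omega)).1
          (by omega)
        omega

/-- surjectivity -/
lemma RK_surj (n : ℕ) : ∀ v, 1 ≤ v → v ≤ n →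
    (∃ x, 1 ≤ x ∧ x ≤ n ∧ Rf n x = v) ∧ (∃ x, 1 ≤ x ∧ x ≤ n ∧ Kf n x = v) := by
  induction n with
  | zero => intro v h1 h2; omega
  | succ n ih =>
    intro v hv1 hv2
    constructor
    · rcases Nat.eq_or_lt_of_le hv2 with h | h
      · exact ⟨1, by omega, by omega, by rw [Rf_one]; omega⟩
      · obtain ⟨x, hx1, hx2, hx3⟩ := (ih v hv1 (by omega)).2
        exact ⟨x + 1, by omega, by omega, by rw [Rf_succ]; simp only [if_neg (by omega : x + 1 ≠ 1)]; simpa⟩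
    · rcases Nat.eq_or_lt_of_le hv1 with h | h
      · exact ⟨1, by omega, by omega, by rw [Kf_one]; omega⟩
      · obtain ⟨x, hx1, hx2, hx3⟩ := (ih (v-1) (by omega) (by omega)).1
        refine ⟨n + 2 - x, by omega, by omega, ?_⟩
        rw [Kf_succ]
        have : n + 2 - (n + 2 - x) = x := by omega
        rw [if_neg (by omega), this]
        omega

/-- key symmetry: `Kf n b + Kf n (n+1-b) = n+1`. -/
lemma Kf_symm : ∀ n, ∀ b, 1 ≤ b → b ≤ n → Kf n b + Kf n (n + 1 - b) = n + 1 := by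
  intro n
  induction n using Nat.strong_induction_on with
  | _ n ih =>
    intro b hb1 hb2
    match n, hb2 with
    | 0, _ => omega
    | 1, _ =>
      have hb : b = 1 := by omega
      subst hb; simp [Kf_one]
    | (m+2), hb2 =>
      -- cases on b = 1, b = m+2, or middle
      rcases eq_or_ne b 1 with hb | hb
      · subst hb
        have h2 : (m:ℕ) + 2 + 1 - 1 = m + 2 := by omega
        rw [h2, Kf_one, Kf_succ, if_neg (by omega)]
        have h3 : m + 1 + 2 - (m+2) = 1 := by omega
        rw [h3]
        rcases Nat.eq_zero_or_pos m with hm | hm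
        · subst hm; simp [Rf]; rfl
        · have : Rf (m+1) 1 = m + 1 := Rf_one m
          omega
      rcases eq_or_ne b (m+2) with hb' | hb'
      · subst hb'
        have h2 : (m:ℕ) + 2 + 1 - (m+2) = 1 := by omega
        rw [h2, Kf_one, Kf_succ, if_neg (by omega)]
        have h3 : m + 1 + 2 - (m+2) = 1 := by omega
        rw [h3]
        rcases Nat.eq_zero_or_pos m with hm | hm
        · subst hm; simp [Rf]; rfl
        · have : Rf (m+1) 1 = m + 1 := Rf_one m
          omega
      · -- middle case: 2 ≤ b ≤ m+1
        have hmid1 : 2 ≤ b := by omega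
        have hmid2 : b ≤ m + 1 := by omega
        rw [Kf_succ, Kf_succ, if_neg (by omega), if_neg (by omega)]
        -- Kf (m+2) b = 1 + Rf (m+1) (m+3-b), Kf (m+2) (m+3-b) = 1 + Rf (m+1) (b)
        have e1 : m + 1 + 2 - b = m + 3 - b := by omega
        have e2 : m + 1 + 2 - (m + 2 + 1 - b) = b := by omega
        rw [e1, e2]
        -- Rf (m+1) x = Kf m (x-1) for x ≥ 2
        have hx1 : 2 ≤ m + 3 - b := by omega
        have r1 : Rf (m+1) (m+3-b) = Kf m (m+3-b-1) := by
          rw [Rf_succ, if_neg (by omega)]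
        have r2 : Rf (m+1) b = Kf m (b-1) := by
          rw [Rf_succ, if_neg (by omega)]
        rw [r1, r2]
        have e3 : m + 3 - b - 1 = m + 1 - (b-1) := by omega
        rw [e3]
        have := ih m (by omega) (b-1) (by omega) (by omega)
        omega

/-- bounds of circled cells -/
lemma Circled.bounds {n : ℕ} {p : ℕ × ℕ} (h : Circled n p) :
    1 ≤ p.1 ∧ p.1 ≤ n ∧ 1 ≤ p.2 ∧ p.2 ≤ n := by
  match n, p, h with
  | 0, p, h => exact h.elim
  | 1, p, h => simp only [Circled] at h; subst h; omega
  | (n+2), (r, c), h =>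
    obtain ⟨h1, h2, h3, h4, _⟩ := h
    exact ⟨h1, h2, h3, h4⟩

lemma circled_succ (m r c : ℕ) : Circled (m+2) (r,c) ↔
    (1 ≤ r ∧ r ≤ m+2 ∧ 1 ≤ c ∧ c ≤ m+2 ∧
      (r = 1 ∨ (2 ≤ r ∧ 2 ≤ c ∧ Circled (m+1) (m + 2 - c + 1, r - 1)))) := Iff.rfl

/-- characterization of the circled region via Rf, Kf -/
lemma circ_iff : ∀ n, 1 ≤ n → ∀ r c, 1 ≤ r → r ≤ n → 1 ≤ c → c ≤ n →
    (Circled n (r, c) ↔ n + 1 ≤ Rf n r + Kf n c) := by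
  intro n
  induction n with
  | zero => omega
  | succ n ih =>
    intro _ r c hr1 hr2 hc1 hc2
    match n, hr2, hc2 with
    | 0, hr2, hc2 =>
      have : r = 1 := by omega
      have : c = 1 := by omega
      subst_vars
      have h1 : Rf 1 1 = 1 := rfl
      have h2 : Kf 1 1 = 1 := rfl
      simp [Circled, h1, h2]
    | (m+1), hr2, hc2 =>
      -- order m+2
      show Circled (m+2) (r, c) ↔ m + 2 + 1 ≤ Rf (m+2) r + Kf (m+2) c
      rcases eq_or_ne r 1 with hr | hr
      · subst hr
        have h1 : Rf (m+2) 1 = m+2 := Rf_one (m+1)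
        have h2 := Kf_range (m+2) c (by omega) (by omega)
        rw [circled_succ]
        constructor
        · intro _; omega
        · intro _; exact ⟨by omega, by omega, by omega, by omega, Or.inl rfl⟩
      · have hr2' : 2 ≤ r := by omega
        have hRr : Rf (m+2) r = Kf (m+1) (r-1) := by rw [Rf_succ, if_neg hr]
        rcases eq_or_ne c 1 with hc | hc
        · subst hc
          have h1 : Kf (m+2) 1 = 1 := Kf_one (m+1)
          have h2 := Kf_range (m+1) (r-1) (by omega) (by omega)
          rw [circled_succ]
          constructor
          · rintro ⟨_, _, _, _, h | ⟨_, h, _⟩⟩ <;> omega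
          · intro h; omega
        · have hc2' : 2 ≤ c := by
            omega
          have hKc : Kf (m+2) c = 1 + Rf (m+1) (m + 1 + 2 - c) := by
            rw [Kf_succ, if_neg hc]
          have e0 : m + 1 + 2 - c = m + 3 - c := by omega
          rw [e0] at hKc
          rw [circled_succ, hKc, hRr]
          have hiter := ih (by omega) (m + 3 - c) (r - 1) (by omega) (by omega)
            (by omega) (by omega)
          constructor
          · rintro ⟨_, _, _, _, h | ⟨_, _, h⟩⟩
            · omega
            · have e1 : m + 2 - c + 1 = m + 3 - c := by omega
              rw [e1] at h
              have := hiter.mp h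
              omega
          · intro h
            refine ⟨by omega, by omega, by omega, by omega, Or.inr ⟨hr2', hc2', ?_⟩⟩
            have e1 : m + 2 - c + 1 = m + 3 - c := by omega
            rw [e1]
            exact hiter.mpr (by omega)

lemma twice_sum_ge (T : Finset ℕ) (h : ∀ i ∈ T, 1 ≤ i) :
    T.card * (T.card + 1) ≤ 2 * ∑ i ∈ T, i := by
  induction T using Finset.strongInductionOn with
  | _ T ih =>
    rcases T.eq_empty_or_nonempty with rfl | hT
    · simp
    · set M := T.max' hT with hMdef
      have hM : M ∈ T := T.max'_mem hT
      have hcard : T.card ≤ M := by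
        have hsub : T ⊆ Finset.Icc 1 M :=
          fun x hx => Finset.mem_Icc.mpr ⟨h x hx, Finset.le_max' T x hx⟩
        have := Finset.card_le_card hsub
        simpa [Nat.card_Icc] using this
      have hss : T.erase M ⊂ T := Finset.erase_ssubset hM
      have hIH := ih _ hss (fun i hi => h i (Finset.mem_of_mem_erase hi))
      have hcard' : (T.erase M).card = T.card - 1 := Finset.card_erase_of_mem hM
      have hsum : ∑ i ∈ T, i = M + ∑ i ∈ T.erase M, i := (Finset.add_sum_erase T id hM).symm
      obtain ⟨k, hk⟩ : ∃ k, T.card = k + 1 :=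
        ⟨T.card - 1, by have := Finset.card_pos.mpr hT; omega⟩
      rw [hk] at hcard ⊢
      rw [hcard', hk] at hIH
      simp only [Nat.add_sub_cancel] at hIH
      have : (k+1) * (k+1+1) = k * (k+1) + 2 * (k+1) := by ring
      omega

lemma twice_sum_Icc (n : ℕ) : 2 * ∑ i ∈ Finset.Icc 1 n, i = n * (n+1) := by
  induction n with
  | zero => simp
  | succ n ih =>
    rw [Finset.sum_Icc_succ_top (by omega)]
    ring_nf
    ring_nf at ih
    omega

lemma twice_sum_le (n v : ℕ) (T : Finset ℕ) (hsub : T ⊆ Finset.Icc 1 n)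
    (hcard : T.card = v) : 2 * ∑ i ∈ T, i ≤ v * (2*n+1-v) := by
  have hvn : v ≤ n := by
    rw [← hcard]
    simpa [Nat.card_Icc] using Finset.card_le_card hsub
  have hsdiff : ∑ i ∈ Finset.Icc 1 n \ T, i + ∑ i ∈ T, i = ∑ i ∈ Finset.Icc 1 n, i :=
    Finset.sum_sdiff hsub
  have hcardc : (Finset.Icc 1 n \ T).card = n - v := by
    rw [Finset.card_sdiff_of_subset hsub, hcard, Nat.card_Icc]
    omega
  have hlow := twice_sum_ge (Finset.Icc 1 n \ T)
    (fun i hi => by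
      have := Finset.mem_sdiff.mp hi
      exact (Finset.mem_Icc.mp this.1).1)
  rw [hcardc] at hlow
  have hgauss := twice_sum_Icc n
  obtain ⟨a, rfl⟩ : ∃ a, n = v + a := ⟨n - v, by omega⟩
  have e1 : v + a - v = a := by omega
  have e2 : v * (2*(v+a)+1-v) = v * (v + 2*a + 1) := by
    congr 1; omega
  rw [e1] at hlow
  rw [e2]
  have hid : (v+a) * ((v+a)+1) = a * (a+1) + v * (v + 2*a+1) := by ring
  omega

lemma bottom_eq (k : ℕ) (T : Finset ℕ) (h1 : ∀ i ∈ T, 1 ≤ i) (hcard : T.card = k)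
    (hsum : 2 * ∑ i ∈ T, i ≤ k * (k+1)) : T = Finset.Icc 1 k := by
  have hsub : T ⊆ Finset.Icc 1 k := by
    intro x hx
    rw [Finset.mem_Icc]
    refine ⟨h1 x hx, ?_⟩
    by_contra hxk
    push_neg at hxk
    have hss : T.erase x ⊂ T := Finset.erase_ssubset hx
    have hlow := twice_sum_ge (T.erase x) (fun i hi => h1 i (Finset.mem_of_mem_erase hi))
    have hcard' : (T.erase x).card = k - 1 := by rw [Finset.card_erase_of_mem hx, hcard]
    have hsum' : ∑ i ∈ T, i = x + ∑ i ∈ T.erase x, i := (Finset.add_sum_erase T id hx).symm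
    rw [hcard'] at hlow
    have hk1 : 1 ≤ k := by
      rw [← hcard]; exact Finset.card_pos.mpr ⟨x, hx⟩
    obtain ⟨j, rfl⟩ : ∃ j, k = j + 1 := ⟨k - 1, by omega⟩
    simp only [Nat.add_sub_cancel] at hlow
    have : (j+1) * (j+1+1) = j * (j+1) + 2*(j+1) := by ring
    omega
  exact Finset.eq_of_subset_of_card_le hsub (by simp [Nat.card_Icc, hcard])

lemma top_eq (n v : ℕ) (T : Finset ℕ) (hsub : T ⊆ Finset.Icc 1 n) (hcard : T.card = v)
    (hsum : v * (2*n+1-v) ≤ 2 * ∑ i ∈ T, i) : T = Finset.Icc (n+1-v) n := by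
  have hvn : v ≤ n := by
    rw [← hcard]
    simpa [Nat.card_Icc] using Finset.card_le_card hsub
  have hsdiff : ∑ i ∈ Finset.Icc 1 n \ T, i + ∑ i ∈ T, i = ∑ i ∈ Finset.Icc 1 n, i :=
    Finset.sum_sdiff hsub
  have hgauss := twice_sum_Icc n
  have hub := twice_sum_le n v T hsub hcard
  have hcardc : (Finset.Icc 1 n \ T).card = n - v := by
    rw [Finset.card_sdiff_of_subset hsub, hcard, Nat.card_Icc]
    omega
  have hcompl : Finset.Icc 1 n \ T = Finset.Icc 1 (n - v) := by
    apply bottom_eq (n-v) _ (fun i hi => (Finset.mem_Icc.mp (Finset.mem_sdiff.mp hi).1).1)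
      hcardc
    -- 2*Σ_compl = n(n+1) - 2Σ_T ≤ n(n+1) - v(2n+1-v) = (n-v)(n-v+1)
    obtain ⟨a, rfl⟩ : ∃ a, n = v + a := ⟨n - v, by omega⟩
    have e1 : v + a - v = a := by omega
    rw [e1]
    have e2 : v * (2*(v+a)+1-v) = v * (v + 2*a + 1) := by congr 1; omega
    rw [e2] at hsum
    have hid : (v+a) * ((v+a)+1) = a * (a+1) + v * (v + 2*a+1) := by ring
    omega
  have hT : T = Finset.Icc 1 n \ Finset.Icc 1 (n-v) := by
    rw [← hcompl]
    ext x
    simp only [Finset.mem_sdiff, Finset.mem_Icc]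
    constructor
    · intro hx
      exact ⟨Finset.mem_Icc.mp (hsub hx), fun h => absurd hx h.2⟩
    · rintro ⟨hx1, hx2⟩
      by_contra hxT
      exact hx2 ⟨hx1, hxT⟩
  rw [hT]
  ext x
  simp only [Finset.mem_sdiff, Finset.mem_Icc]
  omega

lemma all_eq_of_ge_of_sum_le {α : Type*} {s : Finset α} {f : α → ℕ} {t : ℕ}
    (h1 : ∀ x ∈ s, t ≤ f x) (h2 : ∑ x ∈ s, f x ≤ s.card * t) : ∀ x ∈ s, f x = t := by
  intro x hx
  by_contra hne
  have hlt : t < f x := lt_of_le_of_ne (h1 x hx) (Ne.symm hne)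
  have : ∑ _y ∈ s, t < ∑ y ∈ s, f y :=
    Finset.sum_lt_sum h1 ⟨x, hx, hlt⟩
  simp only [Finset.sum_const, smul_eq_mul] at this
  omega

lemma all_eq_of_le_of_sum_ge {α : Type*} {s : Finset α} {f : α → ℕ} {t : ℕ}
    (h1 : ∀ x ∈ s, f x ≤ t) (h2 : s.card * t ≤ ∑ x ∈ s, f x) : ∀ x ∈ s, f x = t := by
  intro x hx
  by_contra hne
  have hlt : f x < t := lt_of_le_of_ne (h1 x hx) hne
  have : ∑ y ∈ s, f y < ∑ _y ∈ s, t :=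
    Finset.sum_lt_sum h1 ⟨x, hx, hlt⟩
  simp only [Finset.sum_const, smul_eq_mul] at this
  omega

noncomputable def cellF (n : ℕ) (P : ℕ × ℕ → Prop) : Finset (ℕ × ℕ) :=
  @Finset.filter _ P (Classical.decPred P) (Finset.Icc 1 n ×ˢ Finset.Icc 1 n)

lemma mem_cellF {n : ℕ} {P : ℕ × ℕ → Prop} {p : ℕ × ℕ} :
    p ∈ cellF n P ↔ (1 ≤ p.1 ∧ p.1 ≤ n ∧ 1 ≤ p.2 ∧ p.2 ≤ n) ∧ P p := by
  letI := Classical.decPred P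
  unfold cellF
  rw [Finset.mem_filter, Finset.mem_product, Finset.mem_Icc, Finset.mem_Icc]
  tauto

lemma circled_row_one {n c : ℕ} (hn : 1 ≤ n) (hc1 : 1 ≤ c) (hc2 : c ≤ n) :
    Circled n (1, c) := by
  match n with
  | 1 =>
    have : c = 1 := by omega
    subst this
    show (1,1) = ((1:ℕ),(1:ℕ))
    rfl
  | (m+2) => exact ⟨by omega, by omega, by omega, by omega, Or.inl rfl⟩

lemma row_exists {n : ℕ} {f : ℕ × ℕ → ℕ} (hf : IsLatinSquare n f)
    {r v : ℕ} (hr1 : 1 ≤ r) (hr2 : r ≤ n) (hv1 : 1 ≤ v) (hv2 : v ≤ n) :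
    ∃ c, 1 ≤ c ∧ c ≤ n ∧ f (r, c) = v := by
  have hsurj := Finset.surj_on_of_inj_on_of_card_le
    (s := Finset.Icc 1 n) (t := Finset.Icc 1 n)
    (fun c _ => f (r, c))
    (fun c hc => by
      have hc' := Finset.mem_Icc.mp hc
      have := hf.1 r c hr1 hr2 hc'.1 hc'.2
      exact Finset.mem_Icc.mpr this)
    (fun c₁ c₂ hc₁ hc₂ heq => by
      have hc₁' := Finset.mem_Icc.mp hc₁
      have hc₂' := Finset.mem_Icc.mp hc₂
      by_contra hne
      exact hf.2.1 r c₁ c₂ hr1 hr2 hc₁'.1 hc₁'.2 hc₂'.1 hc₂'.2 hne heq)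
    le_rfl
  obtain ⟨c, hc, hceq⟩ := hsurj v (Finset.mem_Icc.mpr ⟨hv1, hv2⟩)
  have hc' := Finset.mem_Icc.mp hc
  exact ⟨c, hc'.1, hc'.2, hceq.symm⟩

/-- the number of circled cells with value `v` is `v`. -/
lemma card_Sv {n : ℕ} {f : ℕ × ℕ → ℕ} (hn : 1 ≤ n) (hf : IsPulsarSolution n f)
    {v : ℕ} (hv1 : 1 ≤ v) (hv2 : v ≤ n) :
    (cellF n (fun p => Circled n p ∧ f p = v)).card = v := by
  obtain ⟨c₀, hc₀1, hc₀2, hc₀val⟩ := row_exists hf.1 (r := 1) (v := v) le_rfl hn hv1 hv2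
  have hcirc : Circled n (1, c₀) := circled_row_one hn hc₀1 hc₀2
  have hcnt := hf.2 (1, c₀) hcirc
  rw [hc₀val] at hcnt
  have hset : {q : ℕ × ℕ | Circled n q ∧ f q = v} =
      ↑(cellF n (fun p => Circled n p ∧ f p = v)) := by
    ext q
    simp only [Set.mem_setOf_eq, Finset.coe_sort_coe, Finset.mem_coe, mem_cellF]
    constructor
    · intro hq
      have := hq.1.bounds
      exact ⟨this, hq⟩
    · intro hq; exact hq.2
  rw [hset, Set.ncard_coe_finset] at hcnt
  omega

lemma circled_rigid (n : ℕ) (hn : 1 ≤ n) (f : ℕ × ℕ → ℕ) (hf : IsPulsarSolution n f) :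
    ∀ k v, 1 ≤ v → v ≤ n → n - v = k →
      cellF n (fun p => Circled n p ∧ f p = v)
        = cellF n (fun p => Rf n p.1 + Kf n p.2 + v = 2*n+1) := by
  intro k
  induction k using Nat.strong_induction_on with
  | _ k ih =>
    intro v hv1 hv2 hkv
    set Sv := cellF n (fun p => Circled n p ∧ f p = v) with hSv
    -- pointwise bound on the sums, using IH for larger values
    have hpt : ∀ p ∈ Sv, 2*n+1-v ≤ Rf n p.1 + Kf n p.2 := by
      intro p hp
      rw [hSv, mem_cellF] at hp
      obtain ⟨⟨ha1, ha2, hb1, hb2⟩, hcirc, hval⟩ := hp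
      have hlb : n + 1 ≤ Rf n p.1 + Kf n p.2 :=
        (circ_iff n hn p.1 p.2 ha1 ha2 hb1 hb2).mp hcirc
      have hub1 := Rf_range n p.1 ha1 ha2
      have hub2 := Kf_range n p.2 hb1 hb2
      by_contra hcon
      push_neg at hcon
      set w := 2*n+1 - (Rf n p.1 + Kf n p.2) with hw
      have hw1 : v < w := by omega
      have hw2 : w ≤ n := by omega
      have hDw := ih (n - w) (by omega) w (by omega) hw2 rfl
      have hpDw : p ∈ cellF n (fun p => Rf n p.1 + Kf n p.2 + w = 2*n+1) :=
        mem_cellF.mpr ⟨⟨ha1, ha2, hb1, hb2⟩, by omega⟩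
      rw [← hDw, mem_cellF] at hpDw
      omega
    have hcard : Sv.card = v := card_Sv hn hf hv1 hv2
    -- injectivity of row map and Rf on Sv
    have hrowinj : ∀ p ∈ Sv, ∀ q ∈ Sv, p.1 = q.1 → p = q := by
      intro p hp q hq hpq
      rw [hSv, mem_cellF] at hp hq
      obtain ⟨⟨hpa1, hpa2, hpb1, hpb2⟩, _, hpval⟩ := hp
      obtain ⟨⟨hqa1, hqa2, hqb1, hqb2⟩, _, hqval⟩ := hq
      by_contra hne
      have hbne : p.2 ≠ q.2 := fun h => hne (Prod.ext hpq h)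
      have := hf.1.2.1 p.1 p.2 q.2 hpa1 hpa2 hpb1 hpb2 hqb1 hqb2 hbne
      apply this
      have e1 : ((p.1, p.2) : ℕ × ℕ) = p := rfl
      have e2 : ((p.1, q.2) : ℕ × ℕ) = q := by rw [hpq]
      rw [e1, e2, hpval, hqval]
    have hRinj : ∀ p ∈ Sv, ∀ q ∈ Sv, Rf n p.1 = Rf n q.1 → p = q := by
      intro p hp q hq heq
      have hp' := (mem_cellF.mp hp).1
      have hq' := (mem_cellF.mp hq).1
      exact hrowinj p hp q hq
        ((RK_inj n p.1 q.1 hp'.1 hp'.2.1 hq'.1 hq'.2.1).1 heq)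
    -- column versions
    have hcolinj : ∀ p ∈ Sv, ∀ q ∈ Sv, p.2 = q.2 → p = q := by
      intro p hp q hq hpq
      rw [hSv, mem_cellF] at hp hq
      obtain ⟨⟨hpa1, hpa2, hpb1, hpb2⟩, _, hpval⟩ := hp
      obtain ⟨⟨hqa1, hqa2, hqb1, hqb2⟩, _, hqval⟩ := hq
      by_contra hne
      have hane : p.1 ≠ q.1 := fun h => hne (Prod.ext h hpq)
      have := hf.1.2.2 p.1 q.1 p.2 hpa1 hpa2 hqa1 hqa2 hpb1 hpb2 hane
      apply this
      have e1 : ((p.1, p.2) : ℕ × ℕ) = p := rfl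
      have e2 : ((q.1, p.2) : ℕ × ℕ) = q := by rw [hpq]
      rw [e1, e2, hpval, hqval]
    have hKinj : ∀ p ∈ Sv, ∀ q ∈ Sv, Kf n p.2 = Kf n q.2 → p = q := by
      intro p hp q hq heq
      have hp' := (mem_cellF.mp hp).1
      have hq' := (mem_cellF.mp hq).1
      exact hcolinj p hp q hq
        ((RK_inj n p.2 q.2 hp'.2.2.1 hp'.2.2.2 hq'.2.2.1 hq'.2.2.2).2 heq)
    -- images
    set T : Finset ℕ := Sv.image (fun p => Rf n p.1) with hT
    set T' : Finset ℕ := Sv.image (fun p => Kf n p.2) with hT'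
    have hTcard : T.card = v := by
      rw [hT, Finset.card_image_of_injOn (fun p hp q hq h => hRinj p hp q hq h), hcard]
    have hT'card : T'.card = v := by
      rw [hT', Finset.card_image_of_injOn (fun p hp q hq h => hKinj p hp q hq h), hcard]
    have hTsub : T ⊆ Finset.Icc 1 n := by
      intro i hi
      obtain ⟨p, hp, rfl⟩ := Finset.mem_image.mp hi
      have hp' := (mem_cellF.mp hp).1
      exact Finset.mem_Icc.mpr (Rf_range n p.1 hp'.1 hp'.2.1)
    have hT'sub : T' ⊆ Finset.Icc 1 n := by
      intro i hi
      obtain ⟨p, hp, rfl⟩ := Finset.mem_image.mp hi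
      have hp' := (mem_cellF.mp hp).1
      exact Finset.mem_Icc.mpr (Kf_range n p.2 hp'.2.2.1 hp'.2.2.2)
    have hTsum : ∑ i ∈ T, i = ∑ p ∈ Sv, Rf n p.1 :=
      Finset.sum_image (fun p hp q hq h => hRinj p hp q hq h)
    have hT'sum : ∑ i ∈ T', i = ∑ p ∈ Sv, Kf n p.2 :=
      Finset.sum_image (fun p hp q hq h => hKinj p hp q hq h)
    -- the sum sandwich
    set M := v * (2*n+1-v) with hM
    have hlow : M ≤ ∑ p ∈ Sv, (Rf n p.1 + Kf n p.2) := by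
      have := Finset.card_nsmul_le_sum Sv (fun p => Rf n p.1 + Kf n p.2) (2*n+1-v) hpt
      rw [hcard] at this
      simpa [hM, smul_eq_mul] using this
    have hsplit : ∑ p ∈ Sv, (Rf n p.1 + Kf n p.2)
        = ∑ p ∈ Sv, Rf n p.1 + ∑ p ∈ Sv, Kf n p.2 := Finset.sum_add_distrib
    have hubT : 2 * ∑ i ∈ T, i ≤ M := twice_sum_le n v T hTsub hTcard
    have hubT' : 2 * ∑ i ∈ T', i ≤ M := twice_sum_le n v T' hT'sub hT'card
    have hsum_eq : ∑ p ∈ Sv, (Rf n p.1 + Kf n p.2) = M := by omega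
    -- pointwise equality
    have hptEq : ∀ p ∈ Sv, Rf n p.1 + Kf n p.2 = 2*n+1-v := by
      apply all_eq_of_ge_of_sum_le hpt
      rw [hsum_eq, hcard]
    -- Sv ⊆ Dv
    have hSD : Sv ⊆ cellF n (fun p => Rf n p.1 + Kf n p.2 + v = 2*n+1) := by
      intro p hp
      have hb := (mem_cellF.mp hp).1
      exact mem_cellF.mpr ⟨hb, by have := hptEq p hp; omega⟩
    -- T is the top interval
    have hTtop : T = Finset.Icc (n+1-v) n := by
      apply top_eq n v T hTsub hTcard
      omega
    -- Dv ⊆ Sv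
    have hDS : cellF n (fun p => Rf n p.1 + Kf n p.2 + v = 2*n+1) ⊆ Sv := by
      intro p hp
      rw [mem_cellF] at hp
      obtain ⟨⟨ha1, ha2, hb1, hb2⟩, hsum⟩ := hp
      have hub1 := Rf_range n p.1 ha1 ha2
      have hub2 := Kf_range n p.2 hb1 hb2
      have hmemT : Rf n p.1 ∈ T := by
        rw [hTtop, Finset.mem_Icc]
        omega
      obtain ⟨q, hq, hqeq⟩ := Finset.mem_image.mp hmemT
      have hq' := (mem_cellF.mp hq).1
      have h1 : q.1 = p.1 := (RK_inj n q.1 p.1 hq'.1 hq'.2.1 ha1 ha2).1 hqeq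
      have hqD := hSD hq
      rw [mem_cellF] at hqD
      have h2 : q.2 = p.2 := by
        apply (RK_inj n q.2 p.2 hq'.2.2.1 hq'.2.2.2 hb1 hb2).2
        have := hqD.2
        rw [h1] at this
        omega
      have : q = p := Prod.ext h1 h2
      rw [← this]
      exact hq
    exact Finset.Subset.antisymm hSD hDS

lemma card_Vv {n : ℕ} {f : ℕ × ℕ → ℕ} (hf : IsLatinSquare n f)
    {v : ℕ} (hv1 : 1 ≤ v) (hv2 : v ≤ n) :
    (cellF n (fun p => f p = v)).card = n := by
  have := Finset.card_bij (s := cellF n (fun p => f p = v)) (t := Finset.Icc 1 n)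
    (fun p _ => p.1)
    (fun p hp => by
      have hb := (mem_cellF.mp hp).1
      exact Finset.mem_Icc.mpr ⟨hb.1, hb.2.1⟩)
    (fun p hp q hq heq => by
      obtain ⟨⟨hpa1, hpa2, hpb1, hpb2⟩, hpval⟩ := mem_cellF.mp hp
      obtain ⟨⟨hqa1, hqa2, hqb1, hqb2⟩, hqval⟩ := mem_cellF.mp hq
      by_contra hne
      have heq' : p.1 = q.1 := heq
      have hbne : p.2 ≠ q.2 := fun h => hne (Prod.ext heq' h)
      have hcontra := hf.2.1 p.1 p.2 q.2 hpa1 hpa2 hpb1 hpb2 hqb1 hqb2 hbne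
      apply hcontra
      have e1 : ((p.1, p.2) : ℕ × ℕ) = p := rfl
      have e2 : ((p.1, q.2) : ℕ × ℕ) = q := by rw [heq']
      rw [e1, e2, hpval, hqval])
    (fun r hr => by
      have hr' := Finset.mem_Icc.mp hr
      obtain ⟨c, hc1, hc2, hcv⟩ := row_exists hf hr'.1 hr'.2 hv1 hv2
      exact ⟨(r, c), mem_cellF.mpr ⟨⟨hr'.1, hr'.2, hc1, hc2⟩, hcv⟩, rfl⟩)
  rw [this, Nat.card_Icc]
  omega

lemma card_Uv {n : ℕ} {f : ℕ × ℕ → ℕ} (hn : 1 ≤ n) (hf : IsPulsarSolution n f)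
    {v : ℕ} (hv1 : 1 ≤ v) (hv2 : v ≤ n) :
    (cellF n (fun p => ¬ Circled n p ∧ f p = v)).card = n - v := by
  have hU : cellF n (fun p => ¬ Circled n p ∧ f p = v)
      = cellF n (fun p => f p = v) \ cellF n (fun p => Circled n p ∧ f p = v) := by
    ext p
    rw [Finset.mem_sdiff, mem_cellF, mem_cellF, mem_cellF]
    tauto
  have hsub : cellF n (fun p => Circled n p ∧ f p = v) ⊆ cellF n (fun p => f p = v) := by
    intro p hp
    rw [mem_cellF] at hp ⊢
    exact ⟨hp.1, hp.2.2⟩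
  rw [hU, Finset.card_sdiff_of_subset hsub, card_Sv hn hf hv1 hv2, card_Vv hf.1 hv1 hv2]

lemma uncircled_rigid (n : ℕ) (hn : 1 ≤ n) (f : ℕ × ℕ → ℕ) (hf : IsPulsarSolution n f) :
    ∀ v, 1 ≤ v → v ≤ n →
      cellF n (fun p => ¬ Circled n p ∧ f p = v)
        = cellF n (fun p => Rf n p.1 + Kf n p.2 + v = n+1) := by
  intro v
  induction v using Nat.strong_induction_on with
  | _ v ih =>
    intro hv1 hv2
    set Uv := cellF n (fun p => ¬ Circled n p ∧ f p = v) with hUv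
    -- pointwise bound on the sums, using IH for smaller values
    have hpt : ∀ p ∈ Uv, Rf n p.1 + Kf n p.2 ≤ n+1-v := by
      intro p hp
      rw [hUv, mem_cellF] at hp
      obtain ⟨⟨ha1, ha2, hb1, hb2⟩, hncirc, hval⟩ := hp
      have hub : Rf n p.1 + Kf n p.2 ≤ n := by
        have h := (circ_iff n hn p.1 p.2 ha1 ha2 hb1 hb2)
        by_contra hcon
        exact hncirc (h.mpr (by omega))
      have hlb1 := Rf_range n p.1 ha1 ha2
      have hlb2 := Kf_range n p.2 hb1 hb2
      by_contra hcon
      push_neg at hcon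
      set w := n+1 - (Rf n p.1 + Kf n p.2) with hw
      have hw1 : w < v := by omega
      have hw2 : 1 ≤ w := by omega
      have hDw := ih w hw1 hw2 (by omega)
      have hpDw : p ∈ cellF n (fun p => Rf n p.1 + Kf n p.2 + w = n+1) :=
        mem_cellF.mpr ⟨⟨ha1, ha2, hb1, hb2⟩, by omega⟩
      rw [← hDw, mem_cellF] at hpDw
      omega
    have hcard : Uv.card = n - v := card_Uv hn hf hv1 hv2
    -- injectivity of row map and Rf on Uv
    have hrowinj : ∀ p ∈ Uv, ∀ q ∈ Uv, p.1 = q.1 → p = q := by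
      intro p hp q hq hpq
      rw [hUv, mem_cellF] at hp hq
      obtain ⟨⟨hpa1, hpa2, hpb1, hpb2⟩, _, hpval⟩ := hp
      obtain ⟨⟨hqa1, hqa2, hqb1, hqb2⟩, _, hqval⟩ := hq
      by_contra hne
      have hbne : p.2 ≠ q.2 := fun h => hne (Prod.ext hpq h)
      have hcontra := hf.1.2.1 p.1 p.2 q.2 hpa1 hpa2 hpb1 hpb2 hqb1 hqb2 hbne
      apply hcontra
      have e1 : ((p.1, p.2) : ℕ × ℕ) = p := rfl
      have e2 : ((p.1, q.2) : ℕ × ℕ) = q := by rw [hpq]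
      rw [e1, e2, hpval, hqval]
    have hRinj : ∀ p ∈ Uv, ∀ q ∈ Uv, Rf n p.1 = Rf n q.1 → p = q := by
      intro p hp q hq heq
      have hp' := (mem_cellF.mp hp).1
      have hq' := (mem_cellF.mp hq).1
      exact hrowinj p hp q hq
        ((RK_inj n p.1 q.1 hp'.1 hp'.2.1 hq'.1 hq'.2.1).1 heq)
    have hcolinj : ∀ p ∈ Uv, ∀ q ∈ Uv, p.2 = q.2 → p = q := by
      intro p hp q hq hpq
      rw [hUv, mem_cellF] at hp hq
      obtain ⟨⟨hpa1, hpa2, hpb1, hpb2⟩, _, hpval⟩ := hp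
      obtain ⟨⟨hqa1, hqa2, hqb1, hqb2⟩, _, hqval⟩ := hq
      by_contra hne
      have hane : p.1 ≠ q.1 := fun h => hne (Prod.ext h hpq)
      have hcontra := hf.1.2.2 p.1 q.1 p.2 hpa1 hpa2 hqa1 hqa2 hpb1 hpb2 hane
      apply hcontra
      have e1 : ((p.1, p.2) : ℕ × ℕ) = p := rfl
      have e2 : ((q.1, p.2) : ℕ × ℕ) = q := by rw [hpq]
      rw [e1, e2, hpval, hqval]
    have hKinj : ∀ p ∈ Uv, ∀ q ∈ Uv, Kf n p.2 = Kf n q.2 → p = q := by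
      intro p hp q hq heq
      have hp' := (mem_cellF.mp hp).1
      have hq' := (mem_cellF.mp hq).1
      exact hcolinj p hp q hq
        ((RK_inj n p.2 q.2 hp'.2.2.1 hp'.2.2.2 hq'.2.2.1 hq'.2.2.2).2 heq)
    -- images
    set T : Finset ℕ := Uv.image (fun p => Rf n p.1) with hT
    set T' : Finset ℕ := Uv.image (fun p => Kf n p.2) with hT'
    have hTcard : T.card = n - v := by
      rw [hT, Finset.card_image_of_injOn (fun p hp q hq h => hRinj p hp q hq h), hcard]
    have hT'card : T'.card = n - v := by
      rw [hT', Finset.card_image_of_injOn (fun p hp q hq h => hKinj p hp q hq h), hcard]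
    have hTpos : ∀ i ∈ T, 1 ≤ i := by
      intro i hi
      obtain ⟨p, hp, rfl⟩ := Finset.mem_image.mp hi
      have hp' := (mem_cellF.mp hp).1
      exact (Rf_range n p.1 hp'.1 hp'.2.1).1
    have hT'pos : ∀ i ∈ T', 1 ≤ i := by
      intro i hi
      obtain ⟨p, hp, rfl⟩ := Finset.mem_image.mp hi
      have hp' := (mem_cellF.mp hp).1
      exact (Kf_range n p.2 hp'.2.2.1 hp'.2.2.2).1
    have hTsum : ∑ i ∈ T, i = ∑ p ∈ Uv, Rf n p.1 :=
      Finset.sum_image (fun p hp q hq h => hRinj p hp q hq h)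
    have hT'sum : ∑ i ∈ T', i = ∑ p ∈ Uv, Kf n p.2 :=
      Finset.sum_image (fun p hp q hq h => hKinj p hp q hq h)
    -- the sum sandwich  (note n+1-v = (n-v)+1)
    set P := (n-v) * ((n-v)+1) with hP
    have hup : ∑ p ∈ Uv, (Rf n p.1 + Kf n p.2) ≤ P := by
      have := Finset.sum_le_card_nsmul Uv (fun p => Rf n p.1 + Kf n p.2) (n+1-v) hpt
      rw [hcard] at this
      have e : (n-v) * (n+1-v) = P := by
        rw [hP]; congr 1; omega
      rw [← e]
      simpa [smul_eq_mul] using this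
    have hsplit : ∑ p ∈ Uv, (Rf n p.1 + Kf n p.2)
        = ∑ p ∈ Uv, Rf n p.1 + ∑ p ∈ Uv, Kf n p.2 := Finset.sum_add_distrib
    have hlbT : P ≤ 2 * ∑ i ∈ T, i := by
      have := twice_sum_ge T hTpos
      rw [hTcard] at this
      omega
    have hlbT' : P ≤ 2 * ∑ i ∈ T', i := by
      have := twice_sum_ge T' hT'pos
      rw [hT'card] at this
      omega
    have hsum_eq : ∑ p ∈ Uv, (Rf n p.1 + Kf n p.2) = P := by omega
    -- pointwise equality
    have hptEq : ∀ p ∈ Uv, Rf n p.1 + Kf n p.2 = n+1-v := by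
      apply all_eq_of_le_of_sum_ge hpt
      rw [hsum_eq, hcard, hP]
      have e : (n-v) * (n+1-v) = (n-v) * ((n-v)+1) := by congr 1; omega
      omega
    -- Uv ⊆ Dv
    have hSD : Uv ⊆ cellF n (fun p => Rf n p.1 + Kf n p.2 + v = n+1) := by
      intro p hp
      have hb := (mem_cellF.mp hp).1
      have h1 := hptEq p hp
      have h2 := hpt p hp
      have hlb1 := Rf_range n p.1 hb.1 hb.2.1
      have hlb2 := Kf_range n p.2 hb.2.2.1 hb.2.2.2
      exact mem_cellF.mpr ⟨hb, by omega⟩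
    -- T is the bottom interval
    have hTbot : T = Finset.Icc 1 (n-v) := by
      apply bottom_eq (n-v) T hTpos hTcard
      omega
    -- Dv ⊆ Uv
    have hDS : cellF n (fun p => Rf n p.1 + Kf n p.2 + v = n+1) ⊆ Uv := by
      intro p hp
      rw [mem_cellF] at hp
      obtain ⟨⟨ha1, ha2, hb1, hb2⟩, hsum⟩ := hp
      have hub1 := Rf_range n p.1 ha1 ha2
      have hub2 := Kf_range n p.2 hb1 hb2
      have hmemT : Rf n p.1 ∈ T := by
        rw [hTbot, Finset.mem_Icc]
        omega
      obtain ⟨q, hq, hqeq⟩ := Finset.mem_image.mp hmemT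
      have hq' := (mem_cellF.mp hq).1
      have h1 : q.1 = p.1 := (RK_inj n q.1 p.1 hq'.1 hq'.2.1 ha1 ha2).1 hqeq
      have hqD := hSD hq
      rw [mem_cellF] at hqD
      have h2 : q.2 = p.2 := by
        apply (RK_inj n q.2 p.2 hq'.2.2.1 hq'.2.2.2 hb1 hb2).2
        have := hqD.2
        rw [h1] at this
        omega
      have : q = p := Prod.ext h1 h2
      rw [← this]
      exact hq
    exact Finset.Subset.antisymm hSD hDS

lemma circled_value {n : ℕ} {f : ℕ × ℕ → ℕ} (hn : 1 ≤ n) (hf : IsPulsarSolution n f)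
    {r c : ℕ} (hr1 : 1 ≤ r) (hr2 : r ≤ n) (hc1 : 1 ≤ c) (hc2 : c ≤ n)
    (hcirc : Circled n (r, c)) : Rf n r + Kf n c + f (r, c) = 2*n+1 := by
  have hv := hf.1.1 r c hr1 hr2 hc1 hc2
  have hp : (r,c) ∈ cellF n (fun p => Circled n p ∧ f p = f (r,c)) :=
    mem_cellF.mpr ⟨⟨hr1, hr2, hc1, hc2⟩, hcirc, rfl⟩
  rw [circled_rigid n hn f hf (n - f (r,c)) (f (r,c)) hv.1 hv.2 rfl] at hp
  exact (mem_cellF.mp hp).2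

lemma uncircled_value {n : ℕ} {f : ℕ × ℕ → ℕ} (hn : 1 ≤ n) (hf : IsPulsarSolution n f)
    {r c : ℕ} (hr1 : 1 ≤ r) (hr2 : r ≤ n) (hc1 : 1 ≤ c) (hc2 : c ≤ n)
    (hcirc : ¬ Circled n (r, c)) : Rf n r + Kf n c + f (r, c) = n+1 := by
  have hv := hf.1.1 r c hr1 hr2 hc1 hc2
  have hp : (r,c) ∈ cellF n (fun p => ¬ Circled n p ∧ f p = f (r,c)) :=
    mem_cellF.mpr ⟨⟨hr1, hr2, hc1, hc2⟩, hcirc, rfl⟩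
  rw [uncircled_rigid n hn f hf (f (r,c)) hv.1 hv.2] at hp
  exact (mem_cellF.mp hp).2

lemma ident_col {n : ℕ} (hn : 2 ≤ n) {c : ℕ} (hc1 : 1 ≤ c) (hc2 : c ≤ n-1) :
    Rf (n-1) c + Kf n c = n := by
  obtain ⟨m, rfl⟩ : ∃ m, n = m + 1 := ⟨n - 1, by omega⟩
  simp only [Nat.add_sub_cancel]
  rcases eq_or_ne c 1 with rfl | hc
  · rw [Kf_one]
    obtain ⟨t, rfl⟩ : ∃ t, m = t + 1 := ⟨m - 1, by omega⟩
    rw [Rf_one]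
  · have hc2' : 2 ≤ c := by omega
    rw [Kf_succ, if_neg hc]
    obtain ⟨t, rfl⟩ : ∃ t, m = t + 1 := ⟨m - 1, by omega⟩
    have e1 : t + 1 + 2 - c = t + 3 - c := by omega
    rw [e1]
    have r1 : Rf (t+1) c = Kf t (c-1) := by rw [Rf_succ, if_neg hc]
    have r2 : Rf (t+1) (t+3-c) = Kf t (t+3-c-1) := by
      rw [Rf_succ, if_neg (by omega)]
    rw [r1, r2]
    have hsym := Kf_symm t (c-1) (by omega) (by omega)
    have e2 : t + 1 - (c-1) = t + 3 - c - 1 := by omega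
    rw [e2] at hsym
    omega

lemma ident_row {n : ℕ} (hn : 2 ≤ n) {r : ℕ} (hr1 : 2 ≤ r) (hr2 : r ≤ n) :
    Kf (n-1) (n-r+1) + Rf n r = n := by
  obtain ⟨m, rfl⟩ : ∃ m, n = m + 1 := ⟨n - 1, by omega⟩
  simp only [Nat.add_sub_cancel]
  have hRr : Rf (m+1) r = Kf m (r-1) := by rw [Rf_succ, if_neg (by omega)]
  rw [hRr]
  have hsym := Kf_symm m (m+1-r+1) (by omega) (by omega)
  have e : m + 1 - (m+1-r+1) = r - 1 := by omega
  rw [e] at hsym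
  have e2 : m + 1 - r + 1 = m + 1 - r + 1 := rfl
  omega

/-- For `n ≥ 2`, the uncircled entries of a solution `f` of the `n × n` Pulsar puzzle
are determined by a solution `g` of the `(n-1) × (n-1)` puzzle:
`f (r, c) = n - g (c, n - r + 1)`. -/
theorem pulsar_uncircled_recursion (n : ℕ) (hn : 2 ≤ n) (f g : ℕ × ℕ → ℕ)
    (hf : IsPulsarSolution n f) (hg : IsPulsarSolution (n - 1) g) :
    ∀ r c, 2 ≤ r → r ≤ n → 1 ≤ c → c ≤ n - 1 → ¬ Circled n (r, c) →
      f (r, c) = n - g (c, n - r + 1) := by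
  intro r c hr1 hr2 hc1 hc2 hncirc
  have hfval := uncircled_value (by omega) hf (by omega : 1 ≤ r) hr2 hc1 (by omega) hncirc
  have hfbd := hf.1.1 r c (by omega) hr2 hc1 (by omega)
  have hI1 := ident_col hn hc1 hc2
  have hI2 := ident_row hn hr1 hr2
  have hm1 : 1 ≤ n - 1 := by omega
  have hb1 : 1 ≤ n - r + 1 := by omega
  have hb2 : n - r + 1 ≤ n - 1 := by omega
  have hcg : Circled (n-1) (c, n-r+1) := by
    apply (circ_iff (n-1) hm1 c (n-r+1) hc1 hc2 hb1 hb2).mpr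
    omega
  have hgval := circled_value hm1 hg hc1 hc2 hb1 hb2 hcg
  omega
end

section
/- Let n ≥ 2 and let f be a solution of the n×n Pulsar puzzle. Then the first column below the top row satisfies the symmetric sum property: for every j with 2 ≤ j ≤ n, f(j,1) + f(n+2−j,1) = n. -/
/-!
Deleting the top row and the last column of `C (n + 2)` leaves a copy of `C n` turned by a half
turn. So the row counts `ρ n r = rowCount n r` of `C n` obey `ρ (n + 2) 1 = n + 2`, `ρ (n + 2) 2 = 1` and
`ρ (n + 2) r = ρ n (n + 3 - r) + 1`; by a two-step induction `ρ n` permutes `{1, …, n}` and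
`ρ n j + ρ n (n + 2 - j) = n` for `2 ≤ j ≤ n`.

In a solution the values on the `n (n + 1) / 2` circled cells must be exactly `1, …, n`, value `w`
occurring on `w` circled cells, hence in `w` different rows. Counting the occurrences of the top
`k` values `n + 1 - k, …, n` row by row, each row `i` holds at most `min (ρ i) k` of them, and these
bounds add up to exactly the number of occurrences; so a row with `k` circled cells carries
precisely the values `n + 1 - k, …, n` on them. For `j ≥ 2` the cell `(j, 1)` is not circled, so
`f (j, 1) ≤ n - ρ n j`. Both sides are injective in `j` with values in `{1, …, n - 1}`, so they
have equal sums over `2 ≤ j ≤ n` and must agree; the symmetry of `ρ` finishes the proof.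
-/

open Finset

lemma Finset.sum_comp_eq_sum_of_injOn_of_card_le {α β M : Type*} [AddCommMonoid M]
    {s : Finset α} {t : Finset β} {g : α → β} (hg : Set.InjOn g s) (hmaps : Set.MapsTo g s t)
    (hcard : #t ≤ #s) (φ : β → M) : ∑ x ∈ s, φ (g x) = ∑ y ∈ t, φ y :=
  sum_nbij g hmaps hg (surjOn_of_injOn_of_card_le g hmaps hg hcard) fun _ _ => rfl

lemma Finset.sum_comp_of_image_eq_self {α M : Type*} [DecidableEq α] [AddCommMonoid M]
    {s : Finset α} {g : α → α} (h : s.image g = s) (φ : α → M) :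
    ∑ x ∈ s, φ (g x) = ∑ x ∈ s, φ x := by
  conv_rhs => rw [← h]
  exact (sum_image (injOn_of_card_image_eq (by rw [h]))).symm

lemma Finset.sum_card_inter_eq_sum_card_filter_mem {ι α : Type*} [DecidableEq α]
    (s : Finset ι) (t : Finset α) (X : ι → Finset α) :
    ∑ i ∈ s, #(t ∩ X i) = ∑ a ∈ t, #{i ∈ s | a ∈ X i} := by
  simp_rw [← filter_mem_eq_inter, card_eq_sum_ones, sum_filter]
  exact sum_comm

lemma sum_Icc_min_eq_sum_Icc {n k : ℕ} (hk : k ≤ n) :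
    ∑ j ∈ Icc 1 n, min j k = ∑ w ∈ Icc (n + 1 - k) n, w := by
  -- double count the values lying both among the top `j` and among the top `k` of `1, …, n`
  have hinter : ∀ j ∈ Icc 1 n, #(Icc (n + 1 - k) n ∩ Icc (n + 1 - j) n) = min j k := by
    intro j hj
    rw [mem_Icc] at hj
    rw [show Icc (n + 1 - k) n ∩ Icc (n + 1 - j) n = Icc (n + 1 - min j k) n by
      ext; simp only [mem_inter, mem_Icc]; omega, Nat.card_Icc]
    omega
  have hocc : ∀ w ∈ Icc (n + 1 - k) n, #{j ∈ Icc 1 n | w ∈ Icc (n + 1 - j) n} = w := by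
    intro w hw
    rw [mem_Icc] at hw
    rw [show {j ∈ Icc 1 n | w ∈ Icc (n + 1 - j) n} = Icc (n + 1 - w) n by ext; simp; omega,
      Nat.card_Icc]
    omega
  rw [← sum_congr rfl hinter, sum_card_inter_eq_sum_card_filter_mem, sum_congr rfl hocc]

theorem Icc_subset_of_card_filter_mem_eq {n : ℕ} {X : ℕ → Finset ℕ}
    (hcard : (Icc 1 n).image (fun r => #(X r)) = Icc 1 n)
    (hocc : ∀ w ∈ Icc 1 n, #{r ∈ Icc 1 n | w ∈ X r} = w) {r : ℕ} (hr : r ∈ Icc 1 n) :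
    Icc (n + 1 - #(X r)) n ⊆ X r := by
  set k := #(X r)
  set W := Icc (n + 1 - k) n
  have hk : k ∈ Icc 1 n := hcard ▸ mem_image_of_mem _ hr
  rw [mem_Icc] at hk
  have hW : #W = k := by simp only [W, Nat.card_Icc]; omega
  have hle : ∀ i ∈ Icc 1 n, #(W ∩ X i) ≤ min #(X i) k := fun i _ =>
    le_min (card_le_card inter_subset_right) (hW ▸ card_le_card inter_subset_left)
  have hsum : ∑ i ∈ Icc 1 n, #(W ∩ X i) = ∑ i ∈ Icc 1 n, min #(X i) k :=
    calc ∑ i ∈ Icc 1 n, #(W ∩ X i) = ∑ w ∈ W, w := by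
          rw [sum_card_inter_eq_sum_card_filter_mem]
          refine sum_congr rfl fun w hw => hocc w ?_
          simp only [W, mem_Icc] at hw ⊢
          omega
      _ = ∑ j ∈ Icc 1 n, min j k := (sum_Icc_min_eq_sum_Icc hk.2).symm
      _ = ∑ i ∈ Icc 1 n, min #(X i) k := (sum_comp_of_image_eq_self hcard (min · k)).symm
  have hWX := (sum_eq_sum_iff_of_le hle).1 hsum r hr
  rw [min_self] at hWX
  exact inter_eq_left.1 (eq_of_subset_of_card_le inter_subset_left (hW.trans hWX.symm).le)

lemma Circled.bounds_s13 {n r c : ℕ} (h : Circled n (r, c)) : 1 ≤ r ∧ r ≤ n ∧ 1 ≤ c ∧ c ≤ n := by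
  match n, h with
  | 0, h => exact h.elim
  | 1, h => simp only [Circled, Prod.ext_iff] at h; omega
  | n + 2, h => rw [Circled] at h; omega

lemma circled_row_one_s13 {n c : ℕ} (hc : 1 ≤ c) (hcn : c ≤ n) : Circled n (1, c) := by
  match n with
  | 0 => omega
  | 1 => rw [show c = 1 by omega]; rfl
  | n + 2 => rw [Circled]; omega

lemma Circled.eq_one_of_col_one {n r : ℕ} (h : Circled n (r, 1)) : r = 1 := by
  match n, h with
  | 0, h => exact h.elim
  | 1, h => simp only [Circled, Prod.ext_iff] at h; exact h.1
  | n + 2, h => rw [Circled] at h; omega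

lemma circled_succ_iff {m r c : ℕ} (hr : 2 ≤ r) (hrm : r ≤ m + 1) (hcm : c ≤ m + 1) :
    Circled (m + 1) (r, c) ↔ 2 ≤ c ∧ Circled m (m + 2 - c, r - 1) := by
  match m with
  | 0 => omega
  | m + 1 =>
    rw [Circled, show m + 2 - c + 1 = m + 1 + 2 - c by omega]
    constructor
    · rintro ⟨-, -, -, -, h | ⟨-, hc, h⟩⟩
      · omega
      · exact ⟨hc, h⟩
    · rintro ⟨hc, h⟩
      exact ⟨by omega, hrm, by omega, hcm, Or.inr ⟨hr, hc, h⟩⟩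

lemma circled_add_two_row_two_iff {n c : ℕ} : Circled (n + 2) (2, c) ↔ c = n + 2 := by
  constructor
  · intro h
    have hc := h.bounds_s13.2.2.2
    have h' := ((circled_succ_iff (m := n + 1) le_rfl (by omega) hc).1 h).2
    have := h'.eq_one_of_col_one
    omega
  · rintro rfl
    refine (circled_succ_iff (m := n + 1) le_rfl (by omega) le_rfl).2 ⟨by omega, ?_⟩
    rw [show n + 1 + 2 - (n + 1 + 1) = 1 by omega]
    exact circled_row_one_s13 (by omega) (by omega)

lemma circled_add_two_last_col {n r : ℕ} (hr : 1 ≤ r) (hrn : r ≤ n + 2) :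
    Circled (n + 2) (r, n + 2) := by
  rcases hr.eq_or_lt with rfl | hr
  · exact circled_row_one_s13 (by omega) le_rfl
  refine (circled_succ_iff (m := n + 1) hr hrn le_rfl).2 ⟨by omega, ?_⟩
  rw [show n + 1 + 2 - (n + 1 + 1) = 1 by omega]
  exact circled_row_one_s13 (by omega) (by omega)

lemma circled_add_two_iff {n r c : ℕ} (hr : 3 ≤ r) (hrn : r ≤ n + 2) (hc : c ≤ n + 1) :
    Circled (n + 2) (r, c) ↔ 2 ≤ c ∧ Circled n (n + 3 - r, n + 2 - c) := by
  rw [circled_succ_iff (m := n + 1) (by omega) hrn (by omega)]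
  refine and_congr_right fun hc2 => ?_
  rw [circled_succ_iff (m := n) (by omega) (by omega) (by omega),
    show n + 2 - (r - 1) = n + 3 - r by omega, show n + 1 + 2 - c - 1 = n + 2 - c by omega]
  exact and_iff_right (by omega)

instance Circled.decidable : ∀ n p, Decidable (Circled n p)
  | 0, _ => isFalse not_false
  | 1, _ => inferInstanceAs (Decidable (_ = _))
  | n + 2, (r, c) =>
    have := Circled.decidable (n + 1) (n + 2 - c + 1, r - 1)
    inferInstanceAs (Decidable (1 ≤ r ∧ _))

def rowCount (n r : ℕ) : ℕ := #{c ∈ Icc 1 n | Circled n (r, c)}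

lemma rowCount_one (n : ℕ) : rowCount n 1 = n := by
  rw [rowCount, filter_true_of_mem fun c hc => circled_row_one_s13 (mem_Icc.1 hc).1 (mem_Icc.1 hc).2,
    Nat.card_Icc, Nat.add_sub_cancel]

lemma rowCount_add_two_two (n : ℕ) : rowCount (n + 2) 2 = 1 := by
  rw [rowCount, card_eq_one]
  refine ⟨n + 2, ?_⟩
  ext c
  simp only [mem_filter, mem_Icc, circled_add_two_row_two_iff, mem_singleton]
  omega

lemma rowCount_add_two {n r : ℕ} (hr : 3 ≤ r) (hrn : r ≤ n + 2) :
    rowCount (n + 2) r = rowCount n (n + 3 - r) + 1 := by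
  have hrow : {c ∈ Icc 1 (n + 2) | Circled (n + 2) (r, c)} =
      insert (n + 2) ({c ∈ Icc 1 n | Circled n (n + 3 - r, c)}.image (n + 2 - ·)) := by
    ext c
    simp only [mem_filter, mem_Icc, mem_insert, mem_image]
    constructor
    · rintro ⟨hc, h⟩
      refine or_iff_not_imp_left.2 fun hcn => ?_
      rw [circled_add_two_iff hr hrn (by omega)] at h
      exact ⟨n + 2 - c, ⟨by omega, h.2⟩, by omega⟩
    · rintro (rfl | ⟨c, ⟨hc, h⟩, rfl⟩)
      · exact ⟨by omega, circled_add_two_last_col (by omega) hrn⟩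
      · refine ⟨by omega, (circled_add_two_iff hr hrn (by omega)).2 ⟨by omega, ?_⟩⟩
        rwa [show n + 2 - (n + 2 - c) = c by omega]
  rw [rowCount, rowCount, hrow, card_insert_of_notMem, card_image_of_injOn]
  · intro a ha b hb hab
    simp only [coe_filter, mem_Icc] at ha hb
    obtain ⟨⟨-, ha⟩, -⟩ := ha
    obtain ⟨⟨-, hb⟩, -⟩ := hb
    simp only at hab
    omega
  · simp only [mem_image, mem_filter, mem_Icc]
    omega

lemma rowCount_add_rowCount_reflect :
    ∀ n j, 2 ≤ j → j ≤ n → rowCount n j + rowCount n (n + 2 - j) = n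
  | 0, _, _, _ | 1, _, _, _ => by omega
  | n + 2, j, hj, hjn => by
    by_cases hj' : 3 ≤ j ∧ j ≤ n + 1
    · rw [rowCount_add_two hj'.1 hjn, rowCount_add_two (by omega) (by omega),
        show n + 3 - (n + 2 + 2 - j) = j - 1 by omega, show n + 3 - j = n + 2 - (j - 1) by omega]
      have := rowCount_add_rowCount_reflect n (j - 1) (by omega) (by omega)
      omega
    · have h2 := rowCount_add_two_two n
      have hlast : rowCount (n + 2) (n + 2) = n + 1 := by
        rcases n with _ | n
        · exact h2
        · rw [rowCount_add_two (by omega) le_rfl, show n + 1 + 3 - (n + 1 + 2) = 1 by omega,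
            rowCount_one]
      rcases (show j = 2 ∨ j = n + 2 by omega) with rfl | rfl
      · rw [show n + 2 + 2 - 2 = n + 2 by omega]; omega
      · rw [show n + 2 + 2 - (n + 2) = 2 by omega]; omega

lemma exists_rowCount_eq : ∀ n v, 1 ≤ v → v ≤ n → ∃ r ∈ Icc 1 n, rowCount n r = v
  | 0, _, _, _ => by omega
  | 1, v, _, _ => ⟨1, by simp, by rw [rowCount_one]; omega⟩
  | n + 2, v, hv, hvn => by
    by_cases h1 : v = 1
    · exact ⟨2, by simp, h1 ▸ rowCount_add_two_two n⟩
    by_cases hn : v = n + 2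
    · exact ⟨1, by simp, hn ▸ rowCount_one _⟩
    obtain ⟨r, hr, hrv⟩ := exists_rowCount_eq n (v - 1) (by omega) (by omega)
    rw [mem_Icc] at hr
    refine ⟨n + 3 - r, mem_Icc.2 ⟨by omega, by omega⟩, ?_⟩
    rw [rowCount_add_two (by omega) (by omega), show n + 3 - (n + 3 - r) = r by omega]
    omega

lemma image_rowCount (n : ℕ) : (Icc 1 n).image (rowCount n) = Icc 1 n := by
  refine (eq_of_subset_of_card_le (fun v hv => ?_) card_image_le).symm
  obtain ⟨r, hr, rfl⟩ := exists_rowCount_eq n v (mem_Icc.1 hv).1 (mem_Icc.1 hv).2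
  exact mem_image_of_mem _ hr

lemma rowCount_mem_Icc {n r : ℕ} (hr : r ∈ Icc 1 n) : rowCount n r ∈ Icc 1 n :=
  image_rowCount n ▸ mem_image_of_mem _ hr

lemma rowCount_injOn (n : ℕ) : Set.InjOn (rowCount n) (Icc 1 n) :=
  injOn_of_card_image_eq (by rw [image_rowCount])

lemma rowCount_lt {n j : ℕ} (hj : 2 ≤ j) (hjn : j ≤ n) : rowCount n j < n := by
  have hne : rowCount n j ≠ rowCount n 1 := fun h =>
    absurd (rowCount_injOn n (mem_Icc.2 ⟨by omega, hjn⟩) (mem_Icc.2 ⟨le_rfl, by omega⟩) h)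
      (by omega)
  have := mem_Icc.1 (rowCount_mem_Icc (mem_Icc.2 ⟨by omega, hjn⟩))
  rw [rowCount_one] at hne
  omega

lemma sum_sub_rowCount (n : ℕ) : ∑ j ∈ Icc 2 n, (n - rowCount n j) = ∑ v ∈ Icc 1 (n - 1), v := by
  refine sum_comp_eq_sum_of_injOn_of_card_le (g := fun j => n - rowCount n j) ?_ ?_
    (by simp only [Nat.card_Icc]; omega) id
  · intro a ha b hb hab
    rw [coe_Icc, Set.mem_Icc] at ha hb
    have := rowCount_lt ha.1 ha.2
    have := rowCount_lt hb.1 hb.2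
    exact rowCount_injOn n (mem_Icc.2 ⟨by omega, ha.2⟩) (mem_Icc.2 ⟨by omega, hb.2⟩)
      (by simp only at hab; omega)
  · intro j hj
    simp only [coe_Icc, Set.mem_Icc] at hj ⊢
    have := rowCount_lt hj.1 hj.2
    have := mem_Icc.1 (rowCount_mem_Icc (mem_Icc.2 ⟨by omega, hj.2⟩))
    omega

def circledCells (n : ℕ) : Finset (ℕ × ℕ) := {p ∈ Icc 1 n ×ˢ Icc 1 n | Circled n p}

lemma mem_circledCells {n : ℕ} {p : ℕ × ℕ} : p ∈ circledCells n ↔ Circled n p := by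
  obtain ⟨r, c⟩ := p
  rw [circledCells, mem_filter, mem_product, mem_Icc, mem_Icc]
  exact and_iff_right_of_imp fun h => by have := h.bounds_s13; omega

lemma card_circledCells (n : ℕ) : #(circledCells n) = ∑ k ∈ Icc 1 n, k := by
  rw [circledCells, card_filter, sum_product]
  exact (sum_congr rfl fun r _ => (card_filter _ _).symm).trans
    (sum_comp_of_image_eq_self (image_rowCount n) id)

def rowValues (n : ℕ) (f : ℕ × ℕ → ℕ) (r : ℕ) : Finset ℕ :=
  {c ∈ Icc 1 n | Circled n (r, c)}.image fun c => f (r, c)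

lemma IsLatinSquare.card_rowValues {n : ℕ} {f : ℕ × ℕ → ℕ} (hf : IsLatinSquare n f) {r : ℕ}
    (hr : r ∈ Icc 1 n) : #(rowValues n f r) = rowCount n r := by
  rw [mem_Icc] at hr
  refine card_image_of_injOn fun c₁ hc₁ c₂ hc₂ h => ?_
  obtain ⟨hc₁, -⟩ := mem_filter.1 (mem_coe.1 hc₁)
  obtain ⟨hc₂, -⟩ := mem_filter.1 (mem_coe.1 hc₂)
  rw [mem_Icc] at hc₁ hc₂
  by_contra hne
  exact hf.2.1 r c₁ c₂ hr.1 hr.2 hc₁.1 hc₁.2 hc₂.1 hc₂.2 hne h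

namespace IsPulsarSolution

variable {n : ℕ} {f : ℕ × ℕ → ℕ} (hf : IsPulsarSolution n f)
include hf

lemma card_filter_circledCells_eq {w : ℕ} (hw : w ∈ Icc 1 n) :
    #{p ∈ circledCells n | f p = w} = w := by
  set V := (circledCells n).image f
  have hfiber : ∀ v ∈ V, #{p ∈ circledCells n | f p = v} = v := by
    intro v hv
    obtain ⟨p, hp, rfl⟩ := mem_image.1 hv
    conv_rhs => rw [hf.2 p (mem_circledCells.1 hp)]
    rw [← Set.ncard_coe_finset, coe_filter]
    simp only [mem_circledCells]
  have hVsub : V ⊆ Icc 1 n := by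
    intro v hv
    obtain ⟨⟨r, c⟩, hp, rfl⟩ := mem_image.1 hv
    obtain ⟨h1, h2, h3, h4⟩ := (mem_circledCells.1 hp).bounds_s13
    exact mem_Icc.2 (hf.1.1 r c h1 h2 h3 h4)
  have hsum : ∑ v ∈ Icc 1 n \ V, v + ∑ v ∈ V, v = ∑ v ∈ V, v := by
    rw [sum_sdiff hVsub, ← card_circledCells, card_eq_sum_card_image f]
    exact sum_congr rfl hfiber
  have hV : V = Icc 1 n := by
    refine hVsub.antisymm fun v hv => by_contra fun hvV => ?_
    have := sum_eq_zero_iff.1 (by omega : ∑ v ∈ Icc 1 n \ V, v = 0) v (mem_sdiff.2 ⟨hv, hvV⟩)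
    rw [mem_Icc] at hv
    omega
  exact hfiber w (hV ▸ hw)

lemma card_filter_mem_rowValues {w : ℕ} (hw : w ∈ Icc 1 n) :
    #{r ∈ Icc 1 n | w ∈ rowValues n f r} = w := by
  refine Eq.trans ?_ (hf.card_filter_circledCells_eq hw)
  refine (card_bij (fun p _ => p.1) ?_ ?_ ?_).symm
  · rintro ⟨r, c⟩ hp
    rw [mem_filter, mem_circledCells] at hp
    obtain ⟨h1, h2, h3, h4⟩ := hp.1.bounds_s13
    exact mem_filter.2 ⟨mem_Icc.2 ⟨h1, h2⟩,
      mem_image.2 ⟨c, mem_filter.2 ⟨mem_Icc.2 ⟨h3, h4⟩, hp.1⟩, hp.2⟩⟩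
  · rintro ⟨r, c₁⟩ hp₁ ⟨r', c₂⟩ hp₂ (rfl : r = r')
    rw [mem_filter, mem_circledCells] at hp₁ hp₂
    obtain ⟨h1, h2, h3, h4⟩ := hp₁.1.bounds_s13
    obtain ⟨-, -, h3', h4'⟩ := hp₂.1.bounds_s13
    by_contra hne
    exact hf.1.2.1 r c₁ c₂ h1 h2 h3 h4 h3' h4' (fun h => hne (h ▸ rfl)) (hp₁.2.trans hp₂.2.symm)
  · intro r hr
    obtain ⟨c, hc, hval⟩ := mem_image.1 (mem_filter.1 hr).2
    exact ⟨(r, c), mem_filter.2 ⟨mem_circledCells.2 (mem_filter.1 hc).2, hval⟩, rfl⟩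

lemma le_sub_rowCount {j : ℕ} (hj : j ∈ Icc 2 n) : f (j, 1) ≤ n - rowCount n j := by
  obtain ⟨hj, hjn⟩ := mem_Icc.1 hj
  have hjI : j ∈ Icc 1 n := mem_Icc.2 ⟨by omega, hjn⟩
  have hcard : ∀ r ∈ Icc 1 n, #(rowValues n f r) = rowCount n r := fun _ => hf.1.card_rowValues
  have htop := Icc_subset_of_card_filter_mem_eq (X := rowValues n f)
    (by rw [image_congr fun r hr => hcard r hr, image_rowCount])
    (fun w hw => hf.card_filter_mem_rowValues hw) hjI
  rw [hcard j hjI] at htop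
  have hnot : f (j, 1) ∉ rowValues n f j := by
    simp only [rowValues, mem_image, mem_filter, mem_Icc, not_exists, not_and]
    intro c ⟨hc, hcirc⟩ hval
    have hc1 : c ≠ 1 := by
      rintro rfl
      have := hcirc.eq_one_of_col_one
      omega
    exact hf.1.2.1 j c 1 (by omega) hjn hc.1 hc.2 le_rfl (by omega) hc1 hval
  have hval := hf.1.1 j 1 (by omega) hjn le_rfl (by omega)
  by_contra h
  exact hnot (htop (mem_Icc.2 ⟨by omega, hval.2⟩))

lemma eq_sub_rowCount {j : ℕ} (hj : j ∈ Icc 2 n) : f (j, 1) = n - rowCount n j := by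
  have hle : ∀ j ∈ Icc 2 n, f (j, 1) ≤ n - rowCount n j := fun _ => hf.le_sub_rowCount
  have hcol : ∑ j ∈ Icc 2 n, f (j, 1) = ∑ v ∈ Icc 1 (n - 1), v := by
    refine sum_comp_eq_sum_of_injOn_of_card_le (g := fun j => f (j, 1)) ?_ ?_
      (by simp only [Nat.card_Icc]; omega) id
    · intro a ha b hb hab
      rw [coe_Icc, Set.mem_Icc] at ha hb
      by_contra hne
      exact hf.1.2.2 a b 1 (by omega) ha.2 (by omega) hb.2 le_rfl (by omega) hne hab
    · intro j hj
      simp only [coe_Icc, Set.mem_Icc] at hj ⊢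
      have := hle j (mem_Icc.2 hj)
      have := hf.1.1 j 1 (by omega) hj.2 le_rfl (by omega)
      have := mem_Icc.1 (rowCount_mem_Icc (mem_Icc.2 ⟨by omega, hj.2⟩))
      omega
  exact (sum_eq_sum_iff_of_le hle).1 (hcol.trans (sum_sub_rowCount n).symm) j hj

end IsPulsarSolution

theorem pulsar_first_column_symmetric_sum_general (n : ℕ) (f : ℕ × ℕ → ℕ)
    (hf : IsPulsarSolution n f) :
    ∀ j, 2 ≤ j → j ≤ n → f (j, 1) + f (n + 2 - j, 1) = n := by
  intro j hj hjn
  rw [hf.eq_sub_rowCount (mem_Icc.2 ⟨hj, hjn⟩), hf.eq_sub_rowCount (mem_Icc.2 ⟨by omega, by omega⟩)]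
  have := rowCount_add_rowCount_reflect n j hj hjn
  have := rowCount_lt hj hjn
  have := rowCount_lt (n := n) (j := n + 2 - j) (by omega) (by omega)
  omega

/-- In any solution of the `n × n` Pulsar puzzle with `n ≥ 2`, the first column below
the top row satisfies the symmetric sum property: `f (j, 1) + f (n + 2 - j, 1) = n`. -/
theorem pulsar_first_column_symmetric_sum (n : ℕ) (hn : 2 ≤ n) (f : ℕ × ℕ → ℕ)
    (hf : IsPulsarSolution n f) :
    ∀ j, 2 ≤ j → j ≤ n → f (j, 1) + f (n + 2 - j, 1) = n :=
  pulsar_first_column_symmetric_sum_general n f hf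
end

section
/- Let n ≥ 2 and let f be a solution of the n×n Pulsar puzzle. Then f(1,1) = n, f(1,n) = 1, f(2,1) = n−1, and f(n,1) = 1. -/
lemma circled_bounds : ∀ n r c, Circled n (r, c) → 1 ≤ r ∧ r ≤ n ∧ 1 ≤ c ∧ c ≤ n
  | 0, _, _, h => h.elim
  | 1, r, c, h => by
      simp only [Circled, Prod.mk.injEq] at h
      omega
  | (n + 2), r, c, h => ⟨h.1, h.2.1, h.2.2.1, h.2.2.2.1⟩

lemma circled_row1 : ∀ n, 1 ≤ n → ∀ c, 1 ≤ c → c ≤ n → Circled n (1, c)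
  | 0, h, _, _, _ => by omega
  | 1, _, c, h1, h2 => by
      have : c = 1 := by omega
      subst this; rfl
  | (n + 2), _, c, h1, h2 => ⟨le_refl 1, by omega, h1, h2, Or.inl rfl⟩

lemma circled_colLast : ∀ n, 1 ≤ n → ∀ r, 1 ≤ r → r ≤ n → Circled n (r, n)
  | 0, h, _, _, _ => by omega
  | 1, _, r, h1, h2 => by
      have : r = 1 := by omega
      subst this; rfl
  | (n + 2), _, r, h1, h2 => by
      rcases Nat.eq_or_lt_of_le h1 with h | h
      · rw [← h]
        exact circled_row1 (n + 2) (by omega) (n + 2) (by omega) le_rfl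
      · refine ⟨h1, h2, by omega, le_rfl, Or.inr ⟨by omega, by omega, ?_⟩⟩
        have h3 : n + 2 - (n + 2) + 1 = 1 := by omega
        rw [h3]
        exact circled_row1 (n + 1) (by omega) (r - 1) (by omega) (by omega)

lemma circled_col1 : ∀ n r, Circled n (r, 1) → r = 1
  | 0, _, h => h.elim
  | 1, r, h => by simp only [Circled, Prod.mk.injEq] at h; exact h.1
  | (n + 2), r, h => by
      rcases h.2.2.2.2 with h' | h'
      · exact h'
      · omega

lemma circled_row2 (n c : ℕ) (hn : 2 ≤ n) (h : Circled n (2, c)) : c = n := by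
  obtain ⟨k, rfl⟩ : ∃ k, n = k + 2 := ⟨n - 2, by omega⟩
  rcases h.2.2.2.2 with h' | h'
  · omega
  · have := circled_col1 (k + 1) _ h'.2.2
    have hc : c ≤ k + 2 := h.2.2.2.1
    have hc2 : 2 ≤ c := h'.2.1
    omega

lemma circled_rowLast (n c : ℕ) (hn : 2 ≤ n) (h1 : 2 ≤ c) (h2 : c ≤ n) :
    Circled n (n, c) := by
  obtain ⟨k, rfl⟩ : ∃ k, n = k + 2 := ⟨n - 2, by omega⟩
  refine ⟨by omega, le_rfl, by omega, h2, Or.inr ⟨by omega, h1, ?_⟩⟩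
  have h3 : k + 2 - 1 = k + 1 := by omega
  rw [h3]
  exact circled_colLast (k + 1) (by omega) (k + 2 - c + 1) (by omega) (by omega)

lemma ncard_Icc_nat (a b : ℕ) : (Set.Icc a b).ncard = b + 1 - a := by
  rw [← Finset.coe_Icc, Set.ncard_coe_finset, Nat.card_Icc]

lemma latin_row_surj (n : ℕ) (f : ℕ × ℕ → ℕ) (h : IsLatinSquare n f)
    (r : ℕ) (hr1 : 1 ≤ r) (hr2 : r ≤ n) (v : ℕ) (hv1 : 1 ≤ v) (hv2 : v ≤ n) :
    ∃ c, 1 ≤ c ∧ c ≤ n ∧ f (r, c) = v := by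
  obtain ⟨hrange, hrow, _⟩ := h
  have hinj : Set.InjOn (fun c => f (r, c)) (Set.Icc 1 n) := by
    intro c1 hc1 c2 hc2 heq
    by_contra hne
    exact hrow r c1 c2 hr1 hr2 (Set.mem_Icc.mp hc1).1 (Set.mem_Icc.mp hc1).2
      (Set.mem_Icc.mp hc2).1 (Set.mem_Icc.mp hc2).2 hne heq
  have himg : (fun c => f (r, c)) '' (Set.Icc 1 n) = Set.Icc 1 n := by
    apply Set.eq_of_subset_of_ncard_le
    · rintro x ⟨c, hc, rfl⟩
      rw [Set.mem_Icc] at hc ⊢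
      exact hrange r c hr1 hr2 hc.1 hc.2
    · rw [Set.ncard_image_of_injOn hinj]
    · exact Set.finite_Icc 1 n
  have hv : v ∈ (fun c => f (r, c)) '' (Set.Icc 1 n) := by
    rw [himg]; exact Set.mem_Icc.mpr ⟨hv1, hv2⟩
  obtain ⟨c, hc, hfc⟩ := hv
  exact ⟨c, (Set.mem_Icc.mp hc).1, (Set.mem_Icc.mp hc).2, hfc⟩

lemma latin_col_surj (n : ℕ) (f : ℕ × ℕ → ℕ) (h : IsLatinSquare n f)
    (c : ℕ) (hc1 : 1 ≤ c) (hc2 : c ≤ n) (v : ℕ) (hv1 : 1 ≤ v) (hv2 : v ≤ n) :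
    ∃ r, 1 ≤ r ∧ r ≤ n ∧ f (r, c) = v := by
  obtain ⟨hrange, _, hcol⟩ := h
  have hinj : Set.InjOn (fun r => f (r, c)) (Set.Icc 1 n) := by
    intro r1 hr1 r2 hr2 heq
    by_contra hne
    exact hcol r1 r2 c (Set.mem_Icc.mp hr1).1 (Set.mem_Icc.mp hr1).2
      (Set.mem_Icc.mp hr2).1 (Set.mem_Icc.mp hr2).2 hc1 hc2 hne heq
  have himg : (fun r => f (r, c)) '' (Set.Icc 1 n) = Set.Icc 1 n := by
    apply Set.eq_of_subset_of_ncard_le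
    · rintro x ⟨r, hr, rfl⟩
      rw [Set.mem_Icc] at hr ⊢
      exact hrange r c hr.1 hr.2 hc1 hc2
    · rw [Set.ncard_image_of_injOn hinj]
    · exact Set.finite_Icc 1 n
  have hv : v ∈ (fun r => f (r, c)) '' (Set.Icc 1 n) := by
    rw [himg]; exact Set.mem_Icc.mpr ⟨hv1, hv2⟩
  obtain ⟨r, hr, hfr⟩ := hv
  exact ⟨r, (Set.mem_Icc.mp hr).1, (Set.mem_Icc.mp hr).2, hfr⟩

/-- In any solution of the `n × n` Pulsar puzzle with `n ≥ 2`, the corner and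
near-corner entries satisfy `f (1,1) = n`, `f (1,n) = 1`, `f (2,1) = n - 1`,
`f (n,1) = 1`. -/
theorem pulsar_corner_values (n : ℕ) (hn : 2 ≤ n) (f : ℕ × ℕ → ℕ)
    (hf : IsPulsarSolution n f) :
    f (1, 1) = n ∧ f (1, n) = 1 ∧ f (2, 1) = n - 1 ∧ f (n, 1) = 1 := by
  obtain ⟨hlatin, hpul⟩ := hf
  obtain ⟨hrange, hrow, hcol⟩ := hlatin
  -- the class of circled cells of value v
  have hfin : ∀ v : ℕ, {q : ℕ × ℕ | Circled n q ∧ f q = v}.Finite := by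
    intro v
    apply Set.Finite.subset (Set.finite_Icc (1, 1) (n, n))
    rintro ⟨r, c⟩ ⟨hq, -⟩
    obtain ⟨b1, b2, b3, b4⟩ := circled_bounds n r c hq
    exact Set.mem_Icc.mpr ⟨⟨b1, b3⟩, ⟨b2, b4⟩⟩
  -- each value v in [1, n] appears exactly v times among circled cells
  have hcards : ∀ v, 1 ≤ v → v ≤ n →
      {q : ℕ × ℕ | Circled n q ∧ f q = v}.ncard = v := by
    intro v hv1 hv2
    obtain ⟨c, hc1, hc2, hfc⟩ :=
      latin_row_surj n f ⟨hrange, hrow, hcol⟩ 1 le_rfl (by omega) v hv1 hv2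
    have hcirc : Circled n (1, c) := circled_row1 n (by omega) c hc1 hc2
    have := hpul (1, c) hcirc
    rw [hfc] at this
    exact this.symm
  -- projections are injective on each class
  have hfstinj : ∀ v, Set.InjOn Prod.fst {q : ℕ × ℕ | Circled n q ∧ f q = v} := by
    rintro v ⟨a1, b1⟩ hq1 ⟨a2, b2⟩ hq2 heq
    simp only [Set.mem_setOf_eq] at hq1 hq2
    simp only at heq
    subst heq
    obtain ⟨c1, c2, c3, c4⟩ := circled_bounds n a1 b1 hq1.1
    obtain ⟨d1, d2, d3, d4⟩ := circled_bounds n a1 b2 hq2.1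
    by_contra hne
    have hb : b1 ≠ b2 := fun h => hne (by rw [h])
    exact hrow a1 b1 b2 c1 c2 c3 c4 d3 d4 hb (hq1.2.trans hq2.2.symm)
  have hsndinj : ∀ v, Set.InjOn Prod.snd {q : ℕ × ℕ | Circled n q ∧ f q = v} := by
    rintro v ⟨a1, b1⟩ hq1 ⟨a2, b2⟩ hq2 heq
    simp only [Set.mem_setOf_eq] at hq1 hq2
    simp only at heq
    subst heq
    obtain ⟨c1, c2, c3, c4⟩ := circled_bounds n a1 b1 hq1.1
    obtain ⟨d1, d2, d3, d4⟩ := circled_bounds n a2 b1 hq2.1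
    by_contra hne
    have ha : a1 ≠ a2 := fun h => hne (by rw [h])
    exact hcol a1 a2 b1 c1 c2 d1 d2 c3 c4 ha (hq1.2.trans hq2.2.symm)
  -- value n occupies every row and every column among circled cells
  have hfulcol : ∀ c, 1 ≤ c → c ≤ n →
      ∃ a b, Circled n (a, b) ∧ f (a, b) = n ∧ b = c := by
    intro c hc1 hc2
    have himg : Prod.snd '' {q : ℕ × ℕ | Circled n q ∧ f q = n} = Set.Icc 1 n := by
      apply Set.eq_of_subset_of_ncard_le
      · rintro x ⟨⟨a, b⟩, ⟨hcq, -⟩, rfl⟩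
        obtain ⟨b1, b2, b3, b4⟩ := circled_bounds n a b hcq
        exact Set.mem_Icc.mpr ⟨b3, b4⟩
      · rw [Set.ncard_image_of_injOn (hsndinj n), hcards n (by omega) le_rfl,
          ncard_Icc_nat]
        omega
      · exact Set.finite_Icc 1 n
    have : c ∈ Prod.snd '' {q : ℕ × ℕ | Circled n q ∧ f q = n} := by
      rw [himg]; exact Set.mem_Icc.mpr ⟨hc1, hc2⟩
    obtain ⟨⟨a, b⟩, ⟨hcq, hfq⟩, hb⟩ := this
    exact ⟨a, b, hcq, hfq, hb⟩
  have hfulrow : ∀ r, 1 ≤ r → r ≤ n →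
      ∃ a b, Circled n (a, b) ∧ f (a, b) = n ∧ a = r := by
    intro r hr1 hr2
    have himg : Prod.fst '' {q : ℕ × ℕ | Circled n q ∧ f q = n} = Set.Icc 1 n := by
      apply Set.eq_of_subset_of_ncard_le
      · rintro x ⟨⟨a, b⟩, ⟨hcq, -⟩, rfl⟩
        obtain ⟨b1, b2, b3, b4⟩ := circled_bounds n a b hcq
        exact Set.mem_Icc.mpr ⟨b1, b2⟩
      · rw [Set.ncard_image_of_injOn (hfstinj n), hcards n (by omega) le_rfl,
          ncard_Icc_nat]
        omega
      · exact Set.finite_Icc 1 n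
    have : r ∈ Prod.fst '' {q : ℕ × ℕ | Circled n q ∧ f q = n} := by
      rw [himg]; exact Set.mem_Icc.mpr ⟨hr1, hr2⟩
    obtain ⟨⟨a, b⟩, ⟨hcq, hfq⟩, ha⟩ := this
    exact ⟨a, b, hcq, hfq, ha⟩
  -- claim 1 : f (1,1) = n
  have claim1 : f (1, 1) = n := by
    obtain ⟨a, b, hcq, hfq, hb⟩ := hfulcol 1 le_rfl (by omega)
    subst hb
    have ha : a = 1 := circled_col1 n a hcq
    subst ha
    exact hfq
  -- f (2, n) = n
  have f2n : f (2, n) = n := by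
    obtain ⟨a, b, hcq, hfq, ha⟩ := hfulrow 2 (by omega) hn
    subst ha
    have hb : b = n := circled_row2 n b hn hcq
    subst hb
    exact hfq
  -- claim 2 : f (1, n) = 1, and the unique circled cell of value 1 is (1, n)
  have hS1 : {q : ℕ × ℕ | Circled n q ∧ f q = 1} = {((1 : ℕ), n)} := by
    obtain ⟨c₀, hc01, hc02, hfc0⟩ :=
      latin_row_surj n f ⟨hrange, hrow, hcol⟩ 1 le_rfl (by omega) 1 le_rfl (by omega)
    obtain ⟨r₁, hr11, hr12, hfr1⟩ :=
      latin_col_surj n f ⟨hrange, hrow, hcol⟩ n (by omega) le_rfl 1 le_rfl (by omega)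
    obtain ⟨a, hS⟩ := Set.ncard_eq_one.mp (hcards 1 le_rfl (by omega))
    have h1 : ((1 : ℕ), c₀) ∈ {q : ℕ × ℕ | Circled n q ∧ f q = 1} :=
      ⟨circled_row1 n (by omega) c₀ hc01 hc02, hfc0⟩
    have h2 : (r₁, n) ∈ {q : ℕ × ℕ | Circled n q ∧ f q = 1} :=
      ⟨circled_colLast n (by omega) r₁ hr11 hr12, hfr1⟩
    rw [hS] at h1 h2
    have : ((1 : ℕ), c₀) = (r₁, n) := by
      rw [Set.mem_singleton_iff] at h1 h2
      rw [h1, h2]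
    have hc0n : c₀ = n := (Prod.ext_iff.mp this).2
    rw [Set.mem_singleton_iff] at h1
    rw [hS, ← h1, hc0n]
  have claim2 : f (1, n) = 1 := by
    have : ((1 : ℕ), n) ∈ {q : ℕ × ℕ | Circled n q ∧ f q = 1} := by
      rw [hS1]; rfl
    exact this.2
  -- claim 4 : f (n, 1) = 1
  have claim4 : f (n, 1) = 1 := by
    obtain ⟨c, hc1, hc2, hfc⟩ :=
      latin_row_surj n f ⟨hrange, hrow, hcol⟩ n (by omega) le_rfl 1 le_rfl (by omega)
    rcases Nat.lt_or_ge c 2 with h | h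
    · have : c = 1 := by omega
      subst this; exact hfc
    · exfalso
      have hcq : Circled n (n, c) := circled_rowLast n c hn h hc2
      have : ((n : ℕ), c) ∈ {q : ℕ × ℕ | Circled n q ∧ f q = 1} := ⟨hcq, hfc⟩
      rw [hS1, Set.mem_singleton_iff, Prod.ext_iff] at this
      omega
  -- claim 3 : f (2, 1) = n - 1
  have claim3 : f (2, 1) = n - 1 := by
    obtain ⟨c, hc1, hc2, hfc⟩ :=
      latin_row_surj n f ⟨hrange, hrow, hcol⟩ 2 (by omega) hn (n - 1) (by omega) (by omega)
    rcases Nat.lt_or_ge c 2 with h | h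
    · have : c = 1 := by omega
      subst this; exact hfc
    · exfalso
      -- value n-1 appears (circled) in every column except column 1
      have himg : Prod.snd '' {q : ℕ × ℕ | Circled n q ∧ f q = n - 1} = Set.Icc 2 n := by
        apply Set.eq_of_subset_of_ncard_le
        · rintro x ⟨⟨a, b⟩, ⟨hcq, hfq⟩, rfl⟩
          obtain ⟨b1, b2, b3, b4⟩ := circled_bounds n a b hcq
          have hb : b ≠ 1 := by
            intro hb
            subst hb
            have := circled_col1 n a hcq
            subst this
            rw [claim1] at hfq
            omega
          exact Set.mem_Icc.mpr ⟨by omega, b4⟩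
        · rw [Set.ncard_image_of_injOn (hsndinj (n - 1)),
            hcards (n - 1) (by omega) (by omega), ncard_Icc_nat]
          omega
        · exact Set.finite_Icc 2 n
      have : c ∈ Prod.snd '' {q : ℕ × ℕ | Circled n q ∧ f q = n - 1} := by
        rw [himg]; exact Set.mem_Icc.mpr ⟨h, hc2⟩
      obtain ⟨⟨a, b⟩, ⟨hcq, hfq⟩, hb⟩ := this
      simp only at hb
      subst hb
      obtain ⟨b1, b2, b3, b4⟩ := circled_bounds n a b hcq
      have ha2 : a ≠ 2 := by
        intro ha
        subst ha
        have := circled_row2 n b hn hcq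
        subst this
        rw [f2n] at hfq
        omega
      exact hcol a 2 b b1 b2 (by omega) hn hc1 hc2 ha2 (hfq.trans hfc.symm)
  exact ⟨claim1, claim2, claim3, claim4⟩
end
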